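/- arXiv:1709.09318 — 2 statements merged into one kernel-verified Lean document; each statement's English description precedes it below -/
import Mathlib

section
/- Let U ⊆ ℝ^m be nonempty compact convex, f : ℝ^m → ℝ^n affine, and l : ℝ^m → ℝ strictly concave and continuous. The map μ : ℝ^n → U sending p to the unique maximizer of u ↦ ⟨p, f(u)⟩ + l(u) over U is continuous. -/
open RealInnerProductSpace Filter Topology

/-- Continuity of the best-response map μ sending p to the unique maximizer of
u ↦ ⟪p, f u⟫ + l u over the nonempty compact convex set U. -/
theorem stmt_2 {m n : ℕ} (U : Set (EuclideanSpace ℝ (Fin m)))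
    (f : EuclideanSpace ℝ (Fin m) → EuclideanSpace ℝ (Fin n))
    (l : EuclideanSpace ℝ (Fin m) → ℝ)
    (hne : U.Nonempty) (hcomp : IsCompact U) (hconv : Convex ℝ U)
    (haff : ∀ a b : EuclideanSpace ℝ (Fin m), ∀ t : ℝ,
      f (t • a + (1 - t) • b) = t • f a + (1 - t) • f b)
    (hlcont : Continuous l)
    (hlstrict : ∀ x y : EuclideanSpace ℝ (Fin m), x ≠ y → ∀ t : ℝ, 0 < t → t < 1 →
      t * l x + (1 - t) * l y < l (t • x + (1 - t) • y))
    (μ : EuclideanSpace ℝ (Fin n) → EuclideanSpace ℝ (Fin m))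
    (hμ : ∀ p, μ p ∈ U ∧ IsMaxOn (fun v => ⟪p, f v⟫ + l v) U (μ p)) :
    Continuous μ := by
  classical
  -- f is affine, hence continuous (finite dimension)
  have hsmul : ∀ (t : ℝ) (a : EuclideanSpace ℝ (Fin m)),
      f (t • a) - f 0 = t • (f a - f 0) := by
    intro t a
    have h := haff a 0 t
    rw [smul_zero, add_zero] at h
    rw [h]; module
  have hadd : ∀ a b : EuclideanSpace ℝ (Fin m),
      f (a + b) - f 0 = (f a - f 0) + (f b - f 0) := by
    intro a b
    have key : a + b = (2 : ℝ) • ((1/2 : ℝ) • a + (1 - (1/2 : ℝ)) • b) := by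
      norm_num; module
    rw [key, hsmul, haff a b (1/2 : ℝ)]
    module
  let g : EuclideanSpace ℝ (Fin m) →ₗ[ℝ] EuclideanSpace ℝ (Fin n) :=
    { toFun := fun u => f u - f 0
      map_add' := hadd
      map_smul' := hsmul }
  have hfc : Continuous f := by
    have hg : Continuous g := g.continuous_of_finiteDimensional
    have : f = fun u => g u + f 0 := by
      funext u; simp [g]
    rw [this]; exact hg.add continuous_const
  -- the objective and its uniqueness of maximizer
  have huniq : ∀ (p : EuclideanSpace ℝ (Fin n)) (x : EuclideanSpace ℝ (Fin m)),
      x ∈ U → IsMaxOn (fun v => ⟪p, f v⟫ + l v) U x → x = μ p := by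
    intro p x hx hmax
    by_contra hxne
    set M : EuclideanSpace ℝ (Fin m) → ℝ := fun v => ⟪p, f v⟫ + l v with hM
    set z : EuclideanSpace ℝ (Fin m) := (1/2 : ℝ) • x + (1 - (1/2 : ℝ)) • μ p with hz
    have hzU : z ∈ U := by
      have : (1 - (1/2 : ℝ)) = (1/2 : ℝ) := by norm_num
      rw [hz, this]
      exact hconv hx (hμ p).1 (by norm_num) (by norm_num) (by norm_num)
    have hinner : ⟪p, f z⟫ = (1/2 : ℝ) * ⟪p, f x⟫ + (1 - (1/2 : ℝ)) * ⟪p, f (μ p)⟫ := by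
      rw [hz, haff x (μ p) (1/2 : ℝ), inner_add_right, real_inner_smul_right,
        real_inner_smul_right]
    have hl : (1/2 : ℝ) * l x + (1 - (1/2 : ℝ)) * l (μ p) < l z :=
      hlstrict x (μ p) hxne (1/2) (by norm_num) (by norm_num)
    have hMz : (1/2 : ℝ) * M x + (1 - (1/2 : ℝ)) * M (μ p) < M z := by
      simp only [hM]
      rw [hinner]; linarith
    have h1 : M (μ p) ≤ M x := hmax (hμ p).1
    have h2 : M x ≤ M (μ p) := (hμ p).2 hx
    have h3 : M z ≤ M x := hmax hzU
    clear_value M z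
    linarith
  -- sequential continuity
  rw [continuous_iff_seqContinuous]
  intro s p hs
  apply tendsto_of_subseq_tendsto
  intro ns hns
  obtain ⟨a, haU, φ, hφ, hlim⟩ := hcomp.tendsto_subseq
    (fun k => (hμ (s (ns k))).1)
  refine ⟨φ, ?_⟩
  have hq : Tendsto (fun k => s (ns (φ k))) atTop (𝓝 p) :=
    hs.comp (hns.comp hφ.tendsto_atTop)
  have hamax : IsMaxOn (fun v => ⟪p, f v⟫ + l v) U a := by
    intro v hv
    have hA : Tendsto (fun k => ⟪s (ns (φ k)), f v⟫ + l v) atTop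
        (𝓝 (⟪p, f v⟫ + l v)) := by
      exact Tendsto.add (hq.inner tendsto_const_nhds) tendsto_const_nhds
    have hB : Tendsto (fun k => ⟪s (ns (φ k)), f (μ (s (ns (φ k))))⟫ + l (μ (s (ns (φ k)))))
        atTop (𝓝 (⟪p, f a⟫ + l a)) := by
      have h1 : Tendsto (fun k => μ (s (ns (φ k)))) atTop (𝓝 a) := hlim
      exact Tendsto.add (hq.inner ((hfc.tendsto a).comp h1)) ((hlcont.tendsto a).comp h1)
    have hle : ∀ k, ⟪s (ns (φ k)), f v⟫ + l v ≤
        ⟪s (ns (φ k)), f (μ (s (ns (φ k))))⟫ + l (μ (s (ns (φ k)))) := fun k =>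
      (hμ (s (ns (φ k)))).2 hv
    exact le_of_tendsto_of_tendsto' hA hB hle
  have : a = μ p := huniq p a haU hamax
  rw [← this]
  exact hlim
end

section
/- In the preceding setup, if for each τ the maximizer μ(τ) of v ↦ ⟨h₁(τ), f(τ,v)⟩ + l(τ,v) over U is unique, and u : [t,t_f] → U is a measurable control with I(u) = h₀ (i.e., u is optimal), then u(τ) = μ(τ) for almost every τ ∈ [t, t_f]. -/
open RealInnerProductSpace

/-- If the maximizer μ(τ) is unique for each τ and a measurable control u achieves the
optimal profit I(u) = h₀, then u = μ almost everywhere on [t, tf]. -/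
theorem stmt_7 {m n : ℕ} (U : Set (EuclideanSpace ℝ (Fin m)))
    (t tf : ℝ) (hle : t ≤ tf) (h₀ : ℝ)
    (h₁ : ℝ → EuclideanSpace ℝ (Fin n))
    (f : ℝ → EuclideanSpace ℝ (Fin m) → EuclideanSpace ℝ (Fin n))
    (l : ℝ → EuclideanSpace ℝ (Fin m) → ℝ)
    (μ : ℝ → EuclideanSpace ℝ (Fin m))
    (hμmem : ∀ τ ∈ Set.Icc t tf, μ τ ∈ U)
    (hμmax : ∀ τ ∈ Set.Icc t tf, ∀ v ∈ U,
      ⟪h₁ τ, f τ v⟫ + l τ v ≤ ⟪h₁ τ, f τ (μ τ)⟫ + l τ (μ τ))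
    (hμuniq : ∀ τ ∈ Set.Icc t tf, ∀ v ∈ U,
      ⟪h₁ τ, f τ v⟫ + l τ v = ⟪h₁ τ, f τ (μ τ)⟫ + l τ (μ τ) → v = μ τ)
    (u : ℝ → EuclideanSpace ℝ (Fin m)) (humeas : Measurable u)
    (humem : ∀ τ, u τ ∈ U)
    (hint : IntervalIntegrable
      (fun τ => (⟪h₁ τ, f τ (u τ)⟫ + l τ (u τ)) - (⟪h₁ τ, f τ (μ τ)⟫ + l τ (μ τ)))
      MeasureTheory.volume t tf)
    (hopt : (h₀ + ∫ τ in t..tf,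
      ((⟪h₁ τ, f τ (u τ)⟫ + l τ (u τ)) - (⟪h₁ τ, f τ (μ τ)⟫ + l τ (μ τ)))) = h₀) :
    ∀ᵐ τ ∂(MeasureTheory.volume.restrict (Set.Ioc t tf)), u τ = μ τ := by
  set g : ℝ → ℝ := fun τ =>
    (⟪h₁ τ, f τ (μ τ)⟫ + l τ (μ τ)) - (⟪h₁ τ, f τ (u τ)⟫ + l τ (u τ)) with hg
  have hgnn : ∀ τ ∈ Set.Ioc t tf, 0 ≤ g τ := by
    intro τ hτ
    have hτ' : τ ∈ Set.Icc t tf := Set.Ioc_subset_Icc_self hτ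
    have := hμmax τ hτ' (u τ) (humem τ)
    simp only [hg]; linarith
  have hint' : MeasureTheory.IntegrableOn g (Set.Ioc t tf) := by
    have h := ((intervalIntegrable_iff_integrableOn_Ioc_of_le hle).mp hint).neg
    exact h.congr (Filter.Eventually.of_forall fun τ => by simp only [hg, Pi.neg_apply]; ring)
  have hzero : ∫ τ in Set.Ioc t tf, g τ = 0 := by
    have h1 : ∫ τ in t..tf,
        ((⟪h₁ τ, f τ (u τ)⟫ + l τ (u τ)) - (⟪h₁ τ, f τ (μ τ)⟫ + l τ (μ τ))) = 0 := by
      linarith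
    rw [intervalIntegral.integral_of_le hle] at h1
    have : ∫ τ in Set.Ioc t tf, g τ =
        - ∫ τ in Set.Ioc t tf,
          ((⟪h₁ τ, f τ (u τ)⟫ + l τ (u τ)) - (⟪h₁ τ, f τ (μ τ)⟫ + l τ (μ τ))) := by
      rw [← MeasureTheory.integral_neg]
      refine MeasureTheory.setIntegral_congr_fun measurableSet_Ioc (fun τ _ => by simp only [hg, neg_sub])
    rw [this, h1, neg_zero]
  have hae : ∀ᵐ τ ∂(MeasureTheory.volume.restrict (Set.Ioc t tf)), g τ = 0 := by
    have hnn : 0 ≤ᵐ[MeasureTheory.volume.restrict (Set.Ioc t tf)] g :=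
      (MeasureTheory.ae_restrict_iff' measurableSet_Ioc).mpr
        (Filter.Eventually.of_forall hgnn)
    have := (MeasureTheory.integral_eq_zero_iff_of_nonneg_ae hnn hint').mp hzero
    filter_upwards [this] with τ hτ
    simpa using hτ
  have hmem : ∀ᵐ τ ∂(MeasureTheory.volume.restrict (Set.Ioc t tf)), τ ∈ Set.Ioc t tf :=
    (MeasureTheory.ae_restrict_iff' measurableSet_Ioc).mpr
      (Filter.Eventually.of_forall fun τ h => h)
  filter_upwards [hae, hmem] with τ hτ hτmem
  have hτ' : τ ∈ Set.Icc t tf := Set.Ioc_subset_Icc_self hτmem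
  apply hμuniq τ hτ' (u τ) (humem τ)
  simp only [hg] at hτ
  linarith
end
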